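/- arXiv:1605.08366 — 2 statements merged into one kernel-verified Lean document; each statement's English description precedes it below -/
import Mathlib

section
/- Let H be a digraph and let G be a subdigraph-minimal digraph containing H as a strong minor (that is, G contains H as a strong minor but no proper subdigraph of G does). Then H and G have the same number of strongly connected components. -/
/-- A digraph: a finite vertex set and a finite multiset of arcs (ordered pairs of
distinct vertices; parallel arcs allowed, no loops). -/
structure Digr where
  verts : Finset ℕ
  arcs : Multiset (ℕ × ℕ)
  mem_fst : ∀ e ∈ arcs, Prod.fst e ∈ verts
  mem_snd : ∀ e ∈ arcs, Prod.snd e ∈ verts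
  no_loops : ∀ e ∈ arcs, Prod.fst e ≠ Prod.snd e

namespace Digr

/-- `H` is a subdigraph of `G`. -/
def IsSubdigraph (H G : Digr) : Prop := H.verts ⊆ G.verts ∧ H.arcs ≤ G.arcs

def Adj (G : Digr) (u v : ℕ) : Prop := (u, v) ∈ G.arcs

/-- Reachability by directed paths. -/
def Reach (G : Digr) : ℕ → ℕ → Prop := Relation.ReflTransGen G.Adj

def StronglyConnected (G : Digr) : Prop :=
  G.verts.Nonempty ∧ ∀ u ∈ G.verts, ∀ v ∈ G.verts, G.Reach u v

/-- Reachability in the underlying undirected graph. -/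
def UReach (G : Digr) : ℕ → ℕ → Prop :=
  Relation.ReflTransGen (fun u v => G.Adj u v ∨ G.Adj v u)

/-- Every connected component of the underlying undirected graph induces a
strongly connected subdigraph. -/
def ComponentsStronglyConnected (G : Digr) : Prop :=
  ∀ u ∈ G.verts, ∀ v ∈ G.verts, G.UReach u v → G.Reach u v

def MutuallyReach (G : Digr) (u v : ℕ) : Prop := G.Reach u v ∧ G.Reach v u

/-- The number of strongly connected components of `G`. -/
noncomputable def numSCC (G : Digr) : ℕ :=
  Set.ncard {C : Set ℕ | ∃ v ∈ G.verts, C = {u | u ∈ G.verts ∧ G.MutuallyReach u v}}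

/-- Isomorphism of digraphs (respecting arc multiplicities). -/
def Iso (G H : Digr) : Prop :=
  ∃ φ : ℕ → ℕ, Set.BijOn φ ↑G.verts ↑H.verts ∧
    ∀ u v : ℕ, u ∈ G.verts → v ∈ G.verts →
      Multiset.count (u, v) G.arcs = Multiset.count (φ u, φ v) H.arcs

/-- Deletion of a set of vertices (with all incident arcs). -/
def deleteVerts (G : Digr) (X : Finset ℕ) : Digr where
  verts := G.verts \ X
  arcs := G.arcs.filter fun e => e.1 ∉ X ∧ e.2 ∉ X
  mem_fst := by
    intro e he
    rw [Multiset.mem_filter] at he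
    exact Finset.mem_sdiff.mpr ⟨G.mem_fst e he.1, he.2.1⟩
  mem_snd := by
    intro e he
    rw [Multiset.mem_filter] at he
    exact Finset.mem_sdiff.mpr ⟨G.mem_snd e he.1, he.2.2⟩
  no_loops := by
    intro e he
    rw [Multiset.mem_filter] at he
    exact G.no_loops e he.1

/-- Deletion of a (multi)set of arcs. -/
def deleteArcs (G : Digr) (Y : Multiset (ℕ × ℕ)) : Digr where
  verts := G.verts
  arcs := G.arcs - Y
  mem_fst := fun e he => G.mem_fst e (Multiset.mem_of_le tsub_le_self he)
  mem_snd := fun e he => G.mem_snd e (Multiset.mem_of_le tsub_le_self he)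
  no_loops := fun e he => G.no_loops e (Multiset.mem_of_le tsub_le_self he)

/-- `H` is obtained from `G` by contracting the strongly connected subdigraph `S`
to the single (new) vertex `vS`. -/
def IsSCContractionOf (H G S : Digr) (vS : ℕ) : Prop :=
  S.IsSubdigraph G ∧ S.StronglyConnected ∧ vS ∉ G.verts \ S.verts ∧
  H.verts = (G.verts \ S.verts) ∪ {vS} ∧
  H.arcs = (G.arcs.filter fun e => ¬(e.1 ∈ S.verts ∧ e.2 ∈ S.verts)).map
    fun e => (if e.1 ∈ S.verts then vS else e.1, if e.2 ∈ S.verts then vS else e.2)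

def SCContractStep (G H : Digr) : Prop := ∃ S vS, IsSCContractionOf H G S vS

/-- `H` is a strong minor of `G`. -/
def StrongMinorOf (H G : Digr) : Prop :=
  ∃ G₀ H₀ : Digr, G₀.IsSubdigraph G ∧ Relation.ReflTransGen SCContractStep G₀ H₀ ∧ H₀.Iso H

/-- The arc `(u, v)` is contractible: it is the only arc with head `v`, or the only
arc with tail `u`. -/
def Contractible (G : Digr) (u v : ℕ) : Prop :=
  (u, v) ∈ G.arcs ∧
  (G.arcs.filter (fun a => a.2 = v) = {(u, v)} ∨
   G.arcs.filter (fun a => a.1 = u) = {(u, v)})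

/-- `H` is obtained from `G` by contracting the contractible arc `(u, v)`
(identifying `u` and `v` into the vertex `u`). -/
def IsButterflyContractionOf (H G : Digr) (u v : ℕ) : Prop :=
  G.Contractible u v ∧
  H.verts = G.verts.erase v ∧
  H.arcs = (G.arcs.filter fun a => ¬((a.1 = u ∧ a.2 = v) ∨ (a.1 = v ∧ a.2 = u))).map
    fun a => (if a.1 = v then u else a.1, if a.2 = v then u else a.2)

def ButterflyStep (G H : Digr) : Prop := ∃ u v, IsButterflyContractionOf H G u v

/-- `H` is a butterfly minor of `G`. -/
def ButterflyMinorOf (H G : Digr) : Prop :=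
  ∃ G₀ H₀ : Digr, G₀.IsSubdigraph G ∧ Relation.ReflTransGen ButterflyStep G₀ H₀ ∧ H₀.Iso H

/-- `H` is obtained from `G` by subdividing one arc (replacing `(u, v)` by a directed
path `u, w, v` through a new vertex `w`). -/
def SubdivStep (G H : Digr) : Prop :=
  ∃ u v w : ℕ, (u, v) ∈ G.arcs ∧ w ∉ G.verts ∧
    H.verts = insert w G.verts ∧
    H.arcs = (u, w) ::ₘ (w, v) ::ₘ G.arcs.erase (u, v)

/-- `H` is a topological minor of `G`: some subdivision of a digraph isomorphic to `H`
is a subdigraph of `G`. -/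
def TopMinorOf (H G : Digr) : Prop :=
  ∃ H₀ H₁ : Digr, H₀.Iso H ∧ Relation.ReflTransGen SubdivStep H₀ H₁ ∧ H₁.IsSubdigraph G

/-- A directed path in `G`, as a nonempty list of distinct vertices with consecutive arcs. -/
def IsDipath (G : Digr) (l : List ℕ) : Prop :=
  l ≠ [] ∧ l.Nodup ∧ (∀ x ∈ l, x ∈ G.verts) ∧ l.Chain' (fun a b => (a, b) ∈ G.arcs)

/-- The multiset of arcs traversed by a list of vertices. -/
def walkArcs (l : List ℕ) : Multiset (ℕ × ℕ) := (l.zip l.tail : List (ℕ × ℕ))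

/-- `G` contains `H` as an immersion: there are an injection of `V(H)` into `V(G)` and,
for each arc of `H`, a directed path of `G` joining the images of its endpoints, these
paths being pairwise arc-disjoint. -/
def ImmersionOf (H G : Digr) : Prop :=
  ∃ φ : ℕ → ℕ, Set.InjOn φ ↑H.verts ∧ (∀ v ∈ H.verts, φ v ∈ G.verts) ∧
    ∃ (L : List (ℕ × ℕ)) (P : List (List ℕ)),
      (L : Multiset (ℕ × ℕ)) = H.arcs ∧ P.length = L.length ∧
      (∀ (i : ℕ) (hP : i < P.length) (hL : i < L.length),
        G.IsDipath (P.get ⟨i, hP⟩) ∧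
        (P.get ⟨i, hP⟩).head? = some (φ (L.get ⟨i, hL⟩).1) ∧
        (P.get ⟨i, hP⟩).getLast? = some (φ (L.get ⟨i, hL⟩).2)) ∧
      (P.map walkArcs).sum ≤ G.arcs

/-- A semicomplete digraph: at least one arc between every pair of distinct vertices. -/
def Semicomplete (G : Digr) : Prop :=
  ∀ u ∈ G.verts, ∀ v ∈ G.verts, u ≠ v → (u, v) ∈ G.arcs ∨ (v, u) ∈ G.arcs

/-- An `s`-semicomplete digraph: every vertex is adjacent to all but at most `s` of the
other vertices. -/
def SSemicomplete (s : ℕ) (G : Digr) : Prop :=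
  ∀ v ∈ G.verts,
    (G.verts.filter fun u => u ≠ v ∧ (u, v) ∉ G.arcs ∧ (v, u) ∉ G.arcs).card ≤ s

/-- A path decomposition of a digraph, as a list of bags. -/
def IsPathDecomp (G : Digr) (B : List (Finset ℕ)) : Prop :=
  (∀ X ∈ B, X ⊆ G.verts) ∧
  (∀ v ∈ G.verts, ∃ i, ∃ h : i < B.length, v ∈ B.get ⟨i, h⟩) ∧
  (∀ e ∈ G.arcs, ∃ i j, ∃ hi : i < B.length, ∃ hj : j < B.length,
      j ≤ i ∧ Prod.fst e ∈ B.get ⟨i, hi⟩ ∧ Prod.snd e ∈ B.get ⟨j, hj⟩) ∧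
  (∀ (v : ℕ) (i j k : ℕ) (_hij : i ≤ j) (hjk : j ≤ k)
      (hi : i < B.length) (hk : k < B.length),
      v ∈ B.get ⟨i, hi⟩ → v ∈ B.get ⟨k, hk⟩ → v ∈ B.get ⟨j, lt_of_le_of_lt hjk hk⟩)

/-- The pathwidth of a digraph. -/
noncomputable def pw (G : Digr) : ℕ :=
  sInf {w | ∃ B : List (Finset ℕ), G.IsPathDecomp B ∧ (B.map Finset.card).foldr max 0 - 1 = w}

/-- An ordering of the vertices of `G`. -/
def IsOrdering (G : Digr) (l : List ℕ) : Prop := (l : Multiset ℕ) = G.verts.val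

/-- The number of arcs (with multiplicity) going from the first `i` vertices of the
ordering `l` to the remaining ones. -/
def cutAt (G : Digr) (l : List ℕ) (i : ℕ) : ℕ :=
  (G.arcs.filter fun e => e.1 ∈ l.take i ∧ e.2 ∉ l.take i).card

/-- The cutwidth of a digraph. -/
noncomputable def ctw (G : Digr) : ℕ :=
  sInf {w | ∃ l : List ℕ, G.IsOrdering l ∧ ∀ i, G.cutAt l i ≤ w}

end Digr

/-!
Minimality forces the subdigraph from which `H` is obtained to be `G` itself, so `H` arises
from `G` by contracting strongly connected subdigraphs, up to isomorphism. Both kinds of step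
are given by a surjection of vertex sets whose fibres are mutually reachable and along which
arcs map to walks and lift to arcs; such a map induces a bijection between strongly connected
components.
-/

namespace Digr

def scc (G : Digr) (v : ℕ) : Set ℕ := {u | u ∈ G.verts ∧ G.MutuallyReach u v}

lemma mutuallyReach_refl (G : Digr) (v : ℕ) : G.MutuallyReach v v :=
  ⟨Relation.ReflTransGen.refl, Relation.ReflTransGen.refl⟩

lemma MutuallyReach.symm {G : Digr} {u v : ℕ} (h : G.MutuallyReach u v) :
    G.MutuallyReach v u := ⟨h.2, h.1⟩

lemma MutuallyReach.trans {G : Digr} {u v w : ℕ} (h₁ : G.MutuallyReach u v)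
    (h₂ : G.MutuallyReach v w) : G.MutuallyReach u w :=
  ⟨h₁.1.trans h₂.1, h₂.2.trans h₁.2⟩

lemma reach_mono {S G : Digr} (h : S.arcs ≤ G.arcs) {u v : ℕ} (huv : S.Reach u v) :
    G.Reach u v :=
  Relation.ReflTransGen.mono (fun _ _ hadj => Multiset.mem_of_le h hadj) _ _ huv

lemma scc_eq_scc_iff {G : Digr} {u v : ℕ} (hu : u ∈ G.verts) :
    G.scc u = G.scc v ↔ G.MutuallyReach u v := by
  constructor
  · intro h
    have hu' : u ∈ G.scc u := ⟨hu, G.mutuallyReach_refl u⟩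
    exact (h ▸ hu').2
  · intro h
    ext w
    exact ⟨fun ⟨hw, hwu⟩ => ⟨hw, hwu.trans h⟩, fun ⟨hw, hwv⟩ => ⟨hw, hwv.trans h.symm⟩⟩

lemma numSCC_eq_ncard_image_scc (G : Digr) : G.numSCC = (G.scc '' G.verts).ncard := by
  unfold numSCC
  congr 1
  ext C
  simp only [Set.mem_ofPred_eq, Set.mem_image, Finset.mem_coe, scc]
  exact exists_congr fun v => and_congr_right fun _ => eq_comm

lemma numSCC_eq_of_mutuallyReach_iff {G H : Digr} {f : ℕ → ℕ}
    (hmaps : Set.MapsTo f G.verts H.verts) (hsurj : Set.SurjOn f G.verts H.verts)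
    (hiff : ∀ u ∈ G.verts, ∀ v ∈ G.verts, H.MutuallyReach (f u) (f v) ↔ G.MutuallyReach u v) :
    G.numSCC = H.numSCC := by
  have himage : ∀ v ∈ G.verts, f '' G.scc v = H.scc (f v) := by
    intro v hv
    ext y
    constructor
    · rintro ⟨u, ⟨hu, huv⟩, rfl⟩
      exact ⟨hmaps hu, (hiff u hu v hv).2 huv⟩
    · rintro ⟨hy, hyv⟩
      obtain ⟨u, hu, rfl⟩ := hsurj hy
      exact ⟨u, ⟨hu, (hiff u hu v hv).1 hyv⟩, rfl⟩
  have hinj : Set.InjOn (Set.image f) (G.scc '' G.verts) := by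
    rintro _ ⟨u, hu, rfl⟩ _ ⟨v, hv, rfl⟩ huv
    rw [himage u hu, himage v hv, scc_eq_scc_iff (hmaps hu)] at huv
    exact (scc_eq_scc_iff hu).2 ((hiff u hu v hv).1 huv)
  rw [numSCC_eq_ncard_image_scc, numSCC_eq_ncard_image_scc, ← hinj.ncard_image,
    Set.image_image, ← hsurj.image_eq_of_mapsTo hmaps, Set.image_image]
  exact congrArg _ (Set.image_congr himage)

section Map

variable {G H : Digr} {f : ℕ → ℕ}

lemma reach_of_reach_map (hfib : ∀ a ∈ G.verts, ∀ b ∈ G.verts, f a = f b → G.Reach a b)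
    (hlift : ∀ x y, H.Adj x y → ∃ a b, G.Adj a b ∧ f a = x ∧ f b = y)
    {a b : ℕ} (ha : a ∈ G.verts) (hb : b ∈ G.verts) (h : H.Reach (f a) (f b)) :
    G.Reach a b := by
  suffices ∀ y, H.Reach (f a) y → ∀ b ∈ G.verts, f b = y → G.Reach a b from
    this _ h b hb rfl
  intro y hy
  induction hy with
  | refl => exact fun b hb hab => hfib a ha b hb hab.symm
  | tail _ hadj ih =>
    intro b hb hby
    obtain ⟨c, d, hcd, rfl, rfl⟩ := hlift _ _ hadj
    exact ((ih c (G.mem_fst _ hcd) rfl).tail hcd).trans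
      (hfib d (G.mem_snd _ hcd) b hb hby.symm)

lemma numSCC_eq_of_map (hmaps : Set.MapsTo f G.verts H.verts)
    (hsurj : Set.SurjOn f G.verts H.verts)
    (hadj : ∀ a b, G.Adj a b → H.Reach (f a) (f b))
    (hfib : ∀ a ∈ G.verts, ∀ b ∈ G.verts, f a = f b → G.Reach a b)
    (hlift : ∀ x y, H.Adj x y → ∃ a b, G.Adj a b ∧ f a = x ∧ f b = y) :
    G.numSCC = H.numSCC := by
  have hmap : ∀ {u v}, G.Reach u v → H.Reach (f u) (f v) :=
    Relation.ReflTransGen.lift' f hadj _ _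
  refine numSCC_eq_of_mutuallyReach_iff hmaps hsurj fun u hu v hv => ⟨?_, ?_⟩
  · exact fun ⟨huv, hvu⟩ => ⟨reach_of_reach_map hfib hlift hu hv huv,
      reach_of_reach_map hfib hlift hv hu hvu⟩
  · exact fun ⟨huv, hvu⟩ => ⟨hmap huv, hmap hvu⟩

end Map

lemma Iso.numSCC_eq {G H : Digr} (h : G.Iso H) : G.numSCC = H.numSCC := by
  obtain ⟨φ, hbij, hcount⟩ := h
  have hadj_iff : ∀ a ∈ G.verts, ∀ b ∈ G.verts, H.Adj (φ a) (φ b) ↔ G.Adj a b := by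
    intro a ha b hb
    simp only [Adj, ← Multiset.count_pos, hcount a b ha hb]
  refine numSCC_eq_of_map hbij.mapsTo hbij.surjOn ?_ ?_ ?_
  · intro a b hab
    exact .single ((hadj_iff a (G.mem_fst _ hab) b (G.mem_snd _ hab)).2 hab)
  · intro a ha b hb hab
    exact hbij.injOn ha hb hab ▸ .refl
  · intro x y hxy
    obtain ⟨a, ha, rfl⟩ := hbij.surjOn (H.mem_fst _ hxy)
    obtain ⟨b, hb, rfl⟩ := hbij.surjOn (H.mem_snd _ hxy)
    exact ⟨a, b, (hadj_iff a ha b hb).1 hxy, rfl, rfl⟩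

def contractMap (S : Digr) (vS x : ℕ) : ℕ := if x ∈ S.verts then vS else x

section Contraction

variable {G H S : Digr} {vS : ℕ}

lemma IsSCContractionOf.mem_of_contractMap_eq (h : IsSCContractionOf H G S vS) {a : ℕ}
    (ha : a ∈ G.verts) (hav : S.contractMap vS a = vS) : a ∈ S.verts := by
  by_contra has
  rw [contractMap, if_neg has] at hav
  exact h.2.2.1 (Finset.mem_sdiff.2 ⟨hav ▸ ha, hav ▸ has⟩)

lemma IsSCContractionOf.reach_of_contractMap_eq (h : IsSCContractionOf H G S vS) {a b : ℕ}
    (ha : a ∈ G.verts) (hb : b ∈ G.verts) (hab : S.contractMap vS a = S.contractMap vS b) :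
    G.Reach a b := by
  by_cases has : a ∈ S.verts
  · have hbs : b ∈ S.verts :=
      h.mem_of_contractMap_eq hb (by rw [← hab, contractMap, if_pos has])
    exact reach_mono h.1.2 (h.2.1.2 a has b hbs)
  · by_cases hbs : b ∈ S.verts
    · exact absurd (h.mem_of_contractMap_eq ha (by rw [hab, contractMap, if_pos hbs])) has
    · rw [contractMap, contractMap, if_neg has, if_neg hbs] at hab
      exact hab ▸ .refl

lemma IsSCContractionOf.numSCC_eq (h : IsSCContractionOf H G S vS) :
    G.numSCC = H.numSCC := by
  have hV := h.2.2.2.1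
  have hA : H.arcs = (G.arcs.filter fun e => ¬(e.1 ∈ S.verts ∧ e.2 ∈ S.verts)).map
      fun e => (S.contractMap vS e.1, S.contractMap vS e.2) := h.2.2.2.2
  refine numSCC_eq_of_map (f := S.contractMap vS) ?_ ?_ ?_
    (fun a ha b hb => h.reach_of_contractMap_eq ha hb) ?_
  · intro x hx
    rw [Finset.mem_coe, hV, contractMap]
    split_ifs with hxS
    · exact Finset.mem_union_right _ (Finset.mem_singleton_self vS)
    · exact Finset.mem_union_left _ (Finset.mem_sdiff.2 ⟨hx, hxS⟩)
  · intro y hy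
    rw [Finset.mem_coe, hV, Finset.mem_union, Finset.mem_sdiff, Finset.mem_singleton] at hy
    rcases hy with ⟨hyG, hyS⟩ | rfl
    · exact ⟨y, hyG, if_neg hyS⟩
    · obtain ⟨s, hs⟩ := h.2.1.1
      exact ⟨s, h.1.1 hs, if_pos hs⟩
  · intro a b hab
    by_cases hS : a ∈ S.verts ∧ b ∈ S.verts
    · rw [contractMap, contractMap, if_pos hS.1, if_pos hS.2]
      exact .refl
    · refine .single ?_
      rw [Adj, hA]
      exact Multiset.mem_map_of_mem _ (Multiset.mem_filter.2 ⟨hab, hS⟩)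
  · intro x y hxy
    rw [Adj, hA] at hxy
    obtain ⟨⟨a, b⟩, hab, hxy⟩ := Multiset.mem_map.1 hxy
    obtain ⟨rfl, rfl⟩ := Prod.mk.inj hxy
    exact ⟨a, b, (Multiset.mem_filter.1 hab).1, rfl, rfl⟩

end Contraction

lemma numSCC_eq_of_reflTransGen_scContractStep {G H : Digr}
    (h : Relation.ReflTransGen SCContractStep G H) : G.numSCC = H.numSCC := by
  induction h with
  | refl => rfl
  | tail _ hstep ih =>
    obtain ⟨S, vS, hS⟩ := hstep
    exact ih.trans hS.numSCC_eq

end Digr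

/-- a subdigraph-minimal digraph containing `H` as a strong minor has the
same number of strongly connected components as `H`. -/
theorem numSCC_minimal_strong_minor (H G : Digr)
    (hG : H.StrongMinorOf G)
    (hmin : ∀ G' : Digr, G'.IsSubdigraph G → G' ≠ G → ¬ H.StrongMinorOf G') :
    H.numSCC = G.numSCC := by
  obtain ⟨G₀, H₀, hsub, hsteps, hiso⟩ := hG
  obtain rfl : G₀ = G := by
    by_contra hne
    exact hmin G₀ hsub hne ⟨G₀, H₀, ⟨subset_rfl, le_rfl⟩, hsteps, hiso⟩
  rw [← hiso.numSCC_eq, Digr.numSCC_eq_of_reflTransGen_scContractStep hsteps]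
end

section
/- Let t ∈ ℕ and let 𝓗 be a class of strongly connected digraphs, each having at least two vertices. Then for every digraph G with cutwidth at most t and every natural number k, at least one of the following holds: (a) G contains k pairwise arc-disjoint 𝓗-subdigraphs; or (b) there is a set Y ⊆ E(G) with |Y| ≤ k·t such that G ∖ Y has no 𝓗-subdigraph. -/
/-
Induct on `k` along a vertex ordering of width at most `t`. Choose `m` so that the first `m`
vertices contain no `𝓗`-subdigraph but the first `m + 1` contain one, `D`, and apply induction
to `G` minus its first `m` vertices. A packing there is arc-disjoint from `D`, since an arc of `D`
avoiding the first `m` vertices would be a loop at the `(m + 1)`-st one. A cover `Y` there,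
together with the at most `t` arcs leaving the first `m` vertices, covers `G`: a strongly
connected `𝓗`-subdigraph avoiding those arcs lies either inside that prefix, which is impossible
by the choice of `m`, or entirely outside it, where `Y` hits it.
-/

namespace Digr

open Multiset

variable {G J H : Digr} {𝓗 : Set Digr} {X : Finset ℕ} {Y Y' : Multiset (ℕ × ℕ)}

def HasCopy (𝓗 : Set Digr) (G : Digr) : Prop :=
  ∃ J : Digr, J.IsSubdigraph G ∧ ∃ H ∈ 𝓗, J.Iso H

def HasCopyIn (𝓗 : Set Digr) (G : Digr) (X : Finset ℕ) : Prop :=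
  ∃ J : Digr, J.IsSubdigraph G ∧ J.verts ⊆ X ∧ ∃ H ∈ 𝓗, J.Iso H

def HasArcDisjointCopies (𝓗 : Set Digr) (G : Digr) (k : ℕ) : Prop :=
  ∃ D : Fin k → Digr, (∀ i, (D i).IsSubdigraph G ∧ ∃ H ∈ 𝓗, (D i).Iso H) ∧
    (∑ i, (D i).arcs) ≤ G.arcs

def HasArcCover (𝓗 : Set Digr) (G : Digr) (s : ℕ) : Prop :=
  ∃ Y : Multiset (ℕ × ℕ), Y ≤ G.arcs ∧ Y.card ≤ s ∧ ¬ HasCopy 𝓗 (G.deleteArcs Y)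

def leavingArcs (G : Digr) (X : Finset ℕ) : Multiset (ℕ × ℕ) :=
  G.arcs.filter fun e => e.1 ∈ X ∧ e.2 ∉ X

theorem Iso.stronglyConnected (h : J.Iso H) (hH : H.StronglyConnected) :
    J.StronglyConnected := by
  obtain ⟨φ, hφ, hcount⟩ := h
  obtain ⟨hleft, hright⟩ := hφ.invOn_invFunOn
  set ψ := Function.invFunOn φ ↑J.verts
  have hψ : Set.MapsTo ψ ↑H.verts ↑J.verts := hφ.surjOn.mapsTo_invFunOn
  have hadj : ∀ a b, H.Adj a b → J.Adj (ψ a) (ψ b) := by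
    intro a b hab
    have ha := hψ (H.mem_fst _ hab)
    have hb := hψ (H.mem_snd _ hab)
    rw [Adj, ← count_pos, hcount _ _ ha hb, hright (H.mem_fst _ hab), hright (H.mem_snd _ hab)]
    exact count_pos.2 hab
  obtain ⟨x, hx⟩ := hH.1
  refine ⟨⟨ψ x, hψ hx⟩, fun u hu v hv => ?_⟩
  have h : Relation.ReflTransGen J.Adj (ψ (φ u)) (ψ (φ v)) :=
    (hH.2 _ (hφ.mapsTo hu) _ (hφ.mapsTo hv)).lift ψ hadj
  rwa [hleft hu, hleft hv] at h

theorem StronglyConnected.subset_or_disjoint (hJ : J.StronglyConnected) (X : Finset ℕ)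
    (hX : ∀ e ∈ J.arcs, e.1 ∈ X → e.2 ∈ X) : J.verts ⊆ X ∨ Disjoint J.verts X := by
  refine or_iff_not_imp_right.2 fun h u hu => ?_
  obtain ⟨v, hv, hvX⟩ := Finset.not_disjoint_iff.1 h
  have hvu := hJ.2 v hv u hu
  clear hu
  induction hvu with
  | refl => exact hvX
  | tail _ hab ih => exact hX _ hab ih

theorem IsSubdigraph.trans {K : Digr} (h₁ : J.IsSubdigraph G) (h₂ : G.IsSubdigraph K) :
    J.IsSubdigraph K :=
  ⟨h₁.1.trans h₂.1, h₁.2.trans h₂.2⟩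

theorem deleteVerts_isSubdigraph : (G.deleteVerts X).IsSubdigraph G :=
  ⟨Finset.sdiff_subset, filter_le _ _⟩

theorem IsSubdigraph.of_deleteArcs (h : J.IsSubdigraph (G.deleteArcs Y)) : J.IsSubdigraph G :=
  ⟨h.1, h.2.trans tsub_le_self⟩

theorem IsSubdigraph.deleteArcs_mono (h : J.IsSubdigraph (G.deleteArcs Y)) (hY : Y' ≤ Y) :
    J.IsSubdigraph (G.deleteArcs Y') :=
  ⟨h.1, h.2.trans (tsub_le_tsub_left hY _)⟩

theorem IsSubdigraph.deleteVerts_deleteArcs (h : J.IsSubdigraph (G.deleteArcs Y))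
    (hJX : Disjoint J.verts X) (hY : Y ≤ (G.deleteVerts X).arcs) :
    J.IsSubdigraph ((G.deleteVerts X).deleteArcs Y) := by
  have hout : ∀ x ∈ J.verts, x ∉ X := Finset.disjoint_left.1 hJX
  refine ⟨fun x hx => Finset.mem_sdiff.2 ⟨h.1 hx, hout x hx⟩, ?_⟩
  calc J.arcs = J.arcs.filter fun e => e.1 ∉ X ∧ e.2 ∉ X :=
        (filter_eq_self.2 fun e he => ⟨hout _ (J.mem_fst e he), hout _ (J.mem_snd e he)⟩).symm
    _ ≤ (G.arcs - Y).filter fun e => e.1 ∉ X ∧ e.2 ∉ X := filter_le_filter _ h.2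
    _ = (G.deleteVerts X).arcs - Y := by
        rw [filter_sub, filter_eq_self.2 (le_filter.1 hY).2]
        rfl

theorem IsSubdigraph.not_of_deleteArcs (h : J.IsSubdigraph (G.deleteArcs Y))
    {p : ℕ × ℕ → Prop} [DecidablePred p] (hY : G.arcs.filter p ≤ Y) : ∀ e ∈ J.arcs, ¬ p e := by
  intro e he hp
  have hpos : 0 < count e (G.arcs - Y) := count_pos.2 (mem_of_le h.2 he)
  have hle := count_le_of_le e hY
  rw [count_filter_of_pos hp] at hle
  rw [count_sub] at hpos
  omega

theorem add_le_arcs_of_le_deleteVerts {A B : Multiset (ℕ × ℕ)} (hA : A ≤ G.arcs)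
    (hAX : ∀ e ∈ A, e.1 ∈ X ∨ e.2 ∈ X) (hB : B ≤ (G.deleteVerts X).arcs) : A + B ≤ G.arcs :=
  calc A + B ≤ G.arcs.filter (fun e => ¬(e.1 ∉ X ∧ e.2 ∉ X)) + (G.deleteVerts X).arcs :=
        add_le_add (le_filter.2 ⟨hA, fun e he => by have := hAX e he; tauto⟩) hB
    _ = G.arcs := by rw [add_comm]; exact filter_add_not _ _

theorem HasArcDisjointCopies.succ {Z : Finset ℕ} {k : ℕ}
    (hpack : HasArcDisjointCopies 𝓗 (G.deleteVerts X) k) (hZ : HasCopyIn 𝓗 G Z)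
    (hZX : ((Z : Set ℕ) \ X).Subsingleton) : HasArcDisjointCopies 𝓗 G (k + 1) := by
  obtain ⟨D, hD, hDsum⟩ := hpack
  obtain ⟨J, hJG, hJZ, hJ𝓗⟩ := hZ
  refine ⟨Fin.cons J D, Fin.cases ⟨hJG, hJ𝓗⟩
    fun i => ⟨(hD i).1.trans deleteVerts_isSubdigraph, (hD i).2⟩, ?_⟩
  rw [Fin.sum_univ_succ]
  simp only [Fin.cons_zero, Fin.cons_succ]
  refine add_le_arcs_of_le_deleteVerts hJG.2 (fun e he => ?_) hDsum
  by_contra! hout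
  exact J.no_loops e he
    (hZX ⟨hJZ (J.mem_fst e he), hout.1⟩ ⟨hJZ (J.mem_snd e he), hout.2⟩)

theorem HasArcCover.of_deleteVerts {s t : ℕ} (h𝓗 : ∀ H ∈ 𝓗, H.StronglyConnected)
    (hcov : HasArcCover 𝓗 (G.deleteVerts X) s) (hX : ¬ HasCopyIn 𝓗 G X)
    (hleave : (G.leavingArcs X).card ≤ t) : HasArcCover 𝓗 G (s + t) := by
  obtain ⟨Y, hY, hYcard, hYno⟩ := hcov
  refine ⟨G.leavingArcs X + Y, add_le_arcs_of_le_deleteVerts (filter_le _ _)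
    (fun e he => Or.inl (mem_filter.1 he).2.1) hY, by rw [card_add]; omega, ?_⟩
  rintro ⟨J, hJ, H, hH, hJH⟩
  have hJX : ∀ e ∈ J.arcs, e.1 ∈ X → e.2 ∈ X := fun e he h₁ =>
    by_contra fun h₂ => hJ.not_of_deleteArcs le_self_add e he ⟨h₁, h₂⟩
  rcases (hJH.stronglyConnected (h𝓗 H hH)).subset_or_disjoint X hJX with hsub | hdisj
  · exact hX ⟨J, hJ.of_deleteArcs, hsub, H, hH, hJH⟩
  · exact hYno ⟨J, (hJ.deleteArcs_mono le_add_self).deleteVerts_deleteArcs hdisj hY, H, hH, hJH⟩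

section Ordering

variable {l : List ℕ} {t : ℕ}

theorem exists_ordering_cutAt_le (h : G.ctw ≤ t) :
    ∃ l, G.IsOrdering l ∧ ∀ i, G.cutAt l i ≤ t := by
  have hne : {w | ∃ l, G.IsOrdering l ∧ ∀ i, G.cutAt l i ≤ w}.Nonempty :=
    ⟨_, G.verts.toList, Finset.coe_toList _, fun _ => card_le_card (filter_le _ _)⟩
  obtain ⟨l, hl, hcut⟩ := Nat.sInf_mem hne
  exact ⟨l, hl, fun i => (hcut i).trans h⟩

theorem IsOrdering.mem_iff (hl : G.IsOrdering l) {x : ℕ} : x ∈ l ↔ x ∈ G.verts := by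
  rw [← Finset.mem_val, ← hl, mem_coe]

theorem IsOrdering.nodup (hl : G.IsOrdering l) : l.Nodup := by
  rw [← coe_nodup, hl]
  exact G.verts.nodup

theorem IsOrdering.deleteVerts_take (hl : G.IsOrdering l) (m : ℕ) :
    (G.deleteVerts (l.take m).toFinset).IsOrdering (l.drop m) := by
  have htake : (l.take m).toFinset.val = (l.take m : Multiset ℕ) := by
    rw [List.toFinset_val, (hl.nodup.sublist (List.take_sublist _ _)).dedup]
  show _ = (G.verts \ _).val
  rw [Finset.sdiff_val, htake, ← hl, ← List.take_append_drop m l, ← coe_add,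
    List.take_append_drop, add_tsub_cancel_left]

theorem cutAt_deleteVerts_take_le (m n : ℕ) :
    (G.deleteVerts (l.take m).toFinset).cutAt (l.drop m) n ≤ G.cutAt l (m + n) := by
  refine card_le_card ?_
  rw [deleteVerts, filter_filter]
  refine monotone_filter_right _ ?_
  rintro e ⟨⟨h₁, h₂⟩, -, h₄⟩
  rw [List.mem_toFinset] at h₄
  rw [List.take_add, List.mem_append, List.mem_append]
  exact ⟨Or.inr h₁, by tauto⟩

theorem ctw_deleteVerts_take_le (hl : G.IsOrdering l) (hcut : ∀ i, G.cutAt l i ≤ t) (m : ℕ) :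
    (G.deleteVerts (l.take m).toFinset).ctw ≤ t :=
  Nat.sInf_le ⟨_, hl.deleteVerts_take m, fun n => (cutAt_deleteVerts_take_le m n).trans (hcut _)⟩

theorem cutAt_eq_card_leavingArcs (m : ℕ) :
    G.cutAt l m = (G.leavingArcs (l.take m).toFinset).card := by
  simp only [cutAt, leavingArcs, List.mem_toFinset]

theorem subsingleton_take_succ_sdiff_take (l : List ℕ) (m : ℕ) :
    ((↑(l.take (m + 1)).toFinset : Set ℕ) \ ↑(l.take m).toFinset).Subsingleton := by
  have hmem : ∀ x ∈ ((↑(l.take (m + 1)).toFinset : Set ℕ) \ ↑(l.take m).toFinset),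
      l[m]? = some x := by
    rintro x ⟨h₁, h₂⟩
    simp only [Finset.mem_coe, List.mem_toFinset, List.take_add_one, List.mem_append] at h₁ h₂
    simpa [h₂] using h₁
  intro x hx y hy
  simpa [hmem x hx] using hmem y hy

theorem IsOrdering.exists_not_hasCopyIn_take_and_hasCopyIn_take_succ (hl : G.IsOrdering l)
    (h𝓗 : ∀ H ∈ 𝓗, H.StronglyConnected) (hG : HasCopy 𝓗 G) :
    ∃ m, ¬ HasCopyIn 𝓗 G (l.take m).toFinset ∧ HasCopyIn 𝓗 G (l.take (m + 1)).toFinset := by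
  refine Nat.exists_not_and_succ_of_not_zero_of_exists ?_ ⟨l.length, ?_⟩
  · rintro ⟨J, -, hJ, H, hH, hJH⟩
    obtain ⟨x, hx⟩ := (hJH.stronglyConnected (h𝓗 H hH)).1
    simpa using hJ hx
  · obtain ⟨J, hJ, hJH⟩ := hG
    exact ⟨J, hJ, fun x hx => by simpa [hl.mem_iff] using hJ.1 hx, hJH⟩

end Ordering

end Digr

/-- in digraphs of cutwidth at most `t`, strongly connected subdigraphs from
a class `𝓗` (members having at least two vertices) can be packed or covered with gap `k·t`. -/
theorem bounded_ctw_arc_EP (t : ℕ) (𝓗 : Set Digr)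
    (h𝓗 : ∀ H ∈ 𝓗, H.StronglyConnected ∧ 2 ≤ H.verts.card)
    (G : Digr) (hct : G.ctw ≤ t) (k : ℕ) :
    (∃ D : Fin k → Digr,
      (∀ i, (D i).IsSubdigraph G ∧ ∃ H ∈ 𝓗, (D i).Iso H) ∧
      (∑ i, (D i).arcs) ≤ G.arcs) ∨
    (∃ Y : Multiset (ℕ × ℕ), Y ≤ G.arcs ∧ Y.card ≤ k * t ∧
      ¬ ∃ J : Digr, J.IsSubdigraph (G.deleteArcs Y) ∧ ∃ H ∈ 𝓗, J.Iso H) := by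
  have hsc : ∀ H ∈ 𝓗, H.StronglyConnected := fun H hH => (h𝓗 H hH).1
  induction k generalizing G with
  | zero => exact Or.inl ⟨Fin.elim0, fun i => i.elim0, by simp⟩
  | succ k ih =>
    by_cases hG : Digr.HasCopy 𝓗 G
    · obtain ⟨l, hl, hcut⟩ := Digr.exists_ordering_cutAt_le hct
      obtain ⟨m, hm, hm₁⟩ := hl.exists_not_hasCopyIn_take_and_hasCopyIn_take_succ hsc hG
      rcases ih _ (Digr.ctw_deleteVerts_take_le hl hcut m) with hpack | hcov
      · exact Or.inl (Digr.HasArcDisjointCopies.succ hpack hm₁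
          (Digr.subsingleton_take_succ_sdiff_take l m))
      · rw [Nat.succ_mul]
        exact Or.inr (Digr.HasArcCover.of_deleteVerts hsc hcov hm
          (Digr.cutAt_eq_card_leavingArcs m ▸ hcut m))
    · exact Or.inr ⟨0, Multiset.zero_le _, Nat.zero_le _,
        fun ⟨J, hJ, hJH⟩ => hG ⟨J, hJ.of_deleteArcs, hJH⟩⟩
end
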